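/- For all integers n ≥ 3 and m ≥ 1, the pair (Γ(D_n,m), τ̃) is a stable translation quiver: τ̃ is a bijection of the vertex set and, for all vertices x and y, there is an arrow y → x in Γ(D_n,m) if and only if there is an arrow τ̃(x) → y in Γ(D_n,m). -/
import Mathlib


/-!
Common combinatorial definitions for the translation quivers of
Baur–Marsh, "A geometric description of the m-cluster categories of type Dₙ".

* `DLab` is the type of second coordinates of vertices of a type-`D` translation
  quiver: `DLab.z false` is the label `0`, `DLab.z true` is the label `0̄`, and
  `DLab.pos j` is the (unbarred) label `j ≥ 1`.
* `DVertex N h` is the vertex set `ℤ/N × {0, 0̄, 1, …, h−2}`.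
* `DArrow N h` is the arrow relation of the translation quiver with `N` columns
  and labels `0, 0̄, 1, …, h−2`.
* `DTau N c` is the translation: `(i,j) ↦ (i−1, j̄)` when `i = 0`, `j ∈ {0,0̄}` and
  `c` is odd, and `(i,j) ↦ (i−1,j)` otherwise.

With these conventions, `Γ(D_N, 1)` is `(DVertex N N, DArrow N N, DTau N N)`
and `Γ(D_n, m)` is
`(DVertex (n*m−m+1) n, DArrow (n*m−m+1) n, DTau (n*m−m+1) (n*m))`.
-/

/-- Labels `0` (= `z false`), `0̄` (= `z true`) and `j ≥ 1` (= `pos j`). -/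
inductive DLab : Type
  | z : Bool → DLab
  | pos : ℕ → DLab
deriving DecidableEq

/-- The bar operation on labels: swaps `0` and `0̄`, fixes all other labels. -/
def DLab.bar : DLab → DLab
  | .z b => .z (!b)
  | .pos j => .pos j

/-- The vertex set `ℤ/N × {0, 0̄, 1, …, h−2}`. -/
def DVertex (N h : ℕ) : Set (ZMod N × DLab) :=
  {v | ∀ j : ℕ, v.2 = DLab.pos j → 1 ≤ j ∧ j ≤ h - 2}

/-- The arrows `(i,j) → (i,j−1)` and `(i,j−1) → (i+1,j)` for `1 ≤ j ≤ h−2`,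
together with `(i,1) → (i,0̄)` and `(i,0̄) → (i+1,1)`. -/
inductive DArrow (N h : ℕ) : ZMod N × DLab → ZMod N × DLab → Prop
  | down (i : ZMod N) (j : ℕ) (h1 : 2 ≤ j) (h2 : j ≤ h - 2) :
      DArrow N h (i, DLab.pos j) (i, DLab.pos (j - 1))
  | toZ (i : ZMod N) (b : Bool) :
      DArrow N h (i, DLab.pos 1) (i, DLab.z b)
  | fromZ (i : ZMod N) (b : Bool) :
      DArrow N h (i, DLab.z b) (i + 1, DLab.pos 1)
  | up (i : ZMod N) (j : ℕ) (h1 : 1 ≤ j) (h2 : j + 1 ≤ h - 2) :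
      DArrow N h (i, DLab.pos j) (i + 1, DLab.pos (j + 1))

/-- The translation `τ(i,j) = (i−1, j̄)` if `i = 0`, `j ∈ {0,0̄}` and `c` is odd,
and `τ(i,j) = (i−1, j)` otherwise.  For `Γ(D_N,1)` one takes `c = N`; for
`Γ(D_n,m)` one takes `c = n*m` (and `N = n*m−m+1`). -/
def DTau (N c : ℕ) : ZMod N × DLab → ZMod N × DLab := fun v =>
  match v with
  | (i, DLab.z b) =>
      if i = 0 ∧ c % 2 = 1 then (i - 1, DLab.z (!b)) else (i - 1, DLab.z b)
  | (i, DLab.pos j) => (i - 1, DLab.pos j)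

/-- `p 0 → p 1 → ⋯ → p m` is a path in `Γ(D_N,1)`. -/
def IsPath (N m : ℕ) (p : ℕ → ZMod N × DLab) : Prop :=
  ∀ k, k < m → DArrow N N (p k) (p (k + 1))

/-- `p 0 → p 1 → ⋯ → p m` is a sectional path in `Γ(D_N,1)`:
`τ (p (k+1)) ≠ p (k−1)` for `1 ≤ k ≤ m − 1`. -/
def IsSectional (N m : ℕ) (p : ℕ → ZMod N × DLab) : Prop :=
  IsPath N m p ∧ ∀ k, 1 ≤ k → k + 1 ≤ m → DTau N N (p (k + 1)) ≠ p (k - 1)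

/-- The extra condition defining restricted paths: there is no `1 ≤ k ≤ m−1`
such that for some `r`, `p (k+1) = (r, 0)` and `p (k−1) = (r−1, 0̄)`, or
`p (k+1) = (r, 0̄)` and `p (k−1) = (r−1, 0)`. -/
def NoForbidden (N m : ℕ) (p : ℕ → ZMod N × DLab) : Prop :=
  ¬ ∃ k, 1 ≤ k ∧ k + 1 ≤ m ∧ ∃ r : ZMod N,
      ((p (k + 1) = (r, DLab.z false) ∧ p (k - 1) = (r - 1, DLab.z true)) ∨
       (p (k + 1) = (r, DLab.z true) ∧ p (k - 1) = (r - 1, DLab.z false)))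

/-- `p 0 → p 1 → ⋯ → p m` is a restricted sectional path in `Γ(D_N,1)`. -/
def IsRestricted (N m : ℕ) (p : ℕ → ZMod N × DLab) : Prop :=
  IsSectional N m p ∧ NoForbidden N m p

/-- There is a restricted sectional path of length `m` from `x` to `y` in
`Γ(D_N,1)`; these are exactly the arrows `x → y` of the restricted `m`-th power
`μ_m(Γ(D_N,1))`. -/
def RSPath (N m : ℕ) (x y : ZMod N × DLab) : Prop :=
  ∃ p : ℕ → ZMod N × DLab, IsRestricted N m p ∧ p 0 = x ∧ p m = y

/-- The set `V = {(r,s) : s ∈ {0,0̄} or m ∣ s}` inside the vertex set of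
`Γ(D_N,1)`. -/
def VSet (N m : ℕ) : Set (ZMod N × DLab) :=
  {v | v ∈ DVertex N N ∧ ∀ j : ℕ, v.2 = DLab.pos j → m ∣ j}

/-- The map `σ'` from the vertex set of `Γ(D_n,m)` to the vertex set of
`Γ(D_N,1)`, where `N = n*m−m+1`:  `σ'(i,j) = (i*m, j*m)` if `j ∉ {0,0̄}`, or if
`j ∈ {0,0̄}`, `m` is odd and `n` is even; otherwise, with `i.val` the standard
representative of `i`, `σ'(i,j) = (i*m, j*m)` if `⌊i*m/N⌋` is even and
`σ'(i,j) = (i*m, (j̄)*m)` if `⌊i*m/N⌋` is odd (with the conventions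
`0*m = 0` and `0̄*m = 0̄`). -/
def DSigma (n m : ℕ) : ZMod (n * m - m + 1) × DLab → ZMod (n * m - m + 1) × DLab :=
  fun v =>
    match v with
    | (i, DLab.pos j) => (i * (m : ZMod (n * m - m + 1)), DLab.pos (j * m))
    | (i, DLab.z b) =>
        if m % 2 = 1 ∧ n % 2 = 0 then
          (i * (m : ZMod (n * m - m + 1)), DLab.z b)
        else if (i.val * m) / (n * m - m + 1) % 2 = 0 then
          (i * (m : ZMod (n * m - m + 1)), DLab.z b)
        else
          (i * (m : ZMod (n * m - m + 1)), DLab.z (!b))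

/-- `C` is a connected component of the quiver with arrow relation `A`:
it is nonempty, closed under arrows in both directions, and any two of its
vertices are connected by an unoriented path. -/
def IsConnComponent {α : Type*} (A : α → α → Prop) (C : Set α) : Prop :=
  C.Nonempty ∧ (∀ x ∈ C, ∀ y, (A x y ∨ A y x) → y ∈ C) ∧
    ∀ x ∈ C, ∀ y ∈ C, Relation.ReflTransGen (fun a b => A a b ∨ A b a) x y

/-- The set `X_k = {(i, j) : j ∈ {k, m+k, …, (n−2)m+k}}`. -/
def XSet (N n m k : ℕ) : Set (ZMod N × DLab) :=
  {v | ∃ (i : ZMod N) (l : ℕ), l ≤ n - 2 ∧ v = (i, DLab.pos (l * m + k))}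

/-- Vertex set `ℤ/N × {1, …, h}` of the translation quiver `Γ(A_h, N)`
(the Auslander–Reiten quiver of `D^b(A_h)/τ^N`). -/
def AVertex (N h : ℕ) : Set (ZMod N × ℕ) :=
  {v | 1 ≤ v.2 ∧ v.2 ≤ h}

/-- Arrows of `Γ(A_h, N)`: `(i,j) → (i,j−1)` for `2 ≤ j ≤ h` and
`(i,j) → (i+1,j+1)` for `1 ≤ j ≤ h−1`. -/
inductive AArrow (N h : ℕ) : ZMod N × ℕ → ZMod N × ℕ → Prop
  | down (i : ZMod N) (j : ℕ) (h1 : 2 ≤ j) (h2 : j ≤ h) :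
      AArrow N h (i, j) (i, j - 1)
  | up (i : ZMod N) (j : ℕ) (h1 : 1 ≤ j) (h2 : j + 1 ≤ h) :
      AArrow N h (i, j) (i + 1, j + 1)

/-- Translation of `Γ(A_h, N)`: `(i,j) ↦ (i−1, j)`. -/
def ATau (N : ℕ) (v : ZMod N × ℕ) : ZMod N × ℕ := (v.1 - 1, v.2)

/-- Tagged arcs in the punctured `N`-gon: `TArc.arc i k` is the arc
`D_{i, i+1+k*m}` (for `1 ≤ k ≤ n−2`), and `TArc.tag i b` is the tagged arc
`D_{ii}^+` (for `b = false`) or `D_{ii}^-` (for `b = true`). -/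
inductive TArc (N : ℕ) : Type
  | arc : ZMod N → ℕ → TArc N
  | tag : ZMod N → Bool → TArc N

/-- The set of tagged `m`-arcs: arcs `D_{i,i+1+k*m}` with `1 ≤ k ≤ n−2`
together with all tagged arcs `D_{ii}^±`. -/
def TArcSet (N n : ℕ) : Set (TArc N) :=
  {a | ∀ (i : ZMod N) (k : ℕ), a = TArc.arc i k → 1 ≤ k ∧ k ≤ n - 2}

/-- The `m`-moves between tagged `m`-arcs, i.e. the arrows of `Γ_⊙(n,m)`:
`D_{i,i+1+km} → D_{i,i+1+(k+1)m}` for `1 ≤ k ≤ n−3`;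
`D_{i,i+1+km} → D_{i+m,i+1+km} = D_{i+m,(i+m)+1+(k−1)m}` for `2 ≤ k ≤ n−2`;
`D_{i,i+1+(n−2)m} → D_{ii}^±`; and
`D_{ii}^± → D_{i+m,i} = D_{i+m,(i+m)+1+(n−2)m}`. -/
inductive MMove (N n m : ℕ) : TArc N → TArc N → Prop
  | extend (i : ZMod N) (k : ℕ) (h1 : 1 ≤ k) (h2 : k ≤ n - 3) :
      MMove N n m (TArc.arc i k) (TArc.arc i (k + 1))
  | rotate (i : ZMod N) (k : ℕ) (h1 : 2 ≤ k) (h2 : k ≤ n - 2) :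
      MMove N n m (TArc.arc i k) (TArc.arc (i + (m : ZMod N)) (k - 1))
  | toTag (i : ZMod N) (b : Bool) :
      MMove N n m (TArc.arc i (n - 2)) (TArc.tag i b)
  | fromTag (i : ZMod N) (b : Bool) :
      MMove N n m (TArc.tag i b) (TArc.arc (i + (m : ZMod N)) (n - 2))

/-- The map `τ_m` on tagged `m`-arcs: `D_{i,i+1+km} ↦ D_{i−m,(i−m)+1+km}` and
`D_{ii}^± ↦ D_{i−m,i−m}^±` if `m` is even, `D_{ii}^± ↦ D_{i−m,i−m}^∓` if `m`
is odd. -/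
def TauArc (N m : ℕ) : TArc N → TArc N
  | .arc i k => .arc (i - (m : ZMod N)) k
  | .tag i b => .tag (i - (m : ZMod N)) (if m % 2 = 1 then !b else b)

/-- Explicit inverse of `DTau`. -/
def DTauInv (N c : ℕ) : ZMod N × DLab → ZMod N × DLab := fun v =>
  match v with
  | (i, DLab.z b) =>
      if i + 1 = 0 ∧ c % 2 = 1 then (i + 1, DLab.z (!b)) else (i + 1, DLab.z b)
  | (i, DLab.pos j) => (i + 1, DLab.pos j)

lemma DTauInv_DTau (N c : ℕ) (v : ZMod N × DLab) : DTauInv N c (DTau N c v) = v := by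
  obtain ⟨i, l⟩ := v
  cases l with
  | pos j => simp [DTau, DTauInv, sub_add_cancel]
  | z b =>
    by_cases h : i = 0 ∧ c % 2 = 1
    · obtain ⟨h1, h2⟩ := h
      subst h1
      simp [DTau, DTauInv, h2, sub_add_cancel]
    · simp [DTau, DTauInv, h, sub_add_cancel]

lemma DTau_DTauInv (N c : ℕ) (v : ZMod N × DLab) : DTau N c (DTauInv N c v) = v := by
  obtain ⟨i, l⟩ := v
  cases l with
  | pos j => simp [DTau, DTauInv, add_sub_cancel_right]
  | z b =>
    by_cases h : i + 1 = 0 ∧ c % 2 = 1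
    · obtain ⟨h1, h2⟩ := h
      have hi : i = -1 := eq_neg_of_add_eq_zero_left h1
      subst hi
      simp [DTau, DTauInv, h2]
    · simp [DTau, DTauInv, h, add_sub_cancel_right]

lemma DTau_mem_vertex (N c h : ℕ) (v : ZMod N × DLab) :
    DTau N c v ∈ DVertex N h ↔ v ∈ DVertex N h := by
  obtain ⟨i, l⟩ := v
  cases l with
  | pos j => simp [DTau, DVertex]
  | z b =>
    by_cases hc : i = 0 ∧ c % 2 = 1 <;> simp [DTau, DVertex, hc]

/-- For `n ≥ 3` and `m ≥ 1`, `(Γ(D_n,m), τ̃)` is a stable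
translation quiver: `τ̃` is a bijection of the vertex set, and for all vertices
`x, y` there is an arrow `y → x` iff there is an arrow `τ̃ x → y`. -/
theorem gamma_D_n_m_is_stable_translation_quiver (n m : ℕ)
    (hn : 3 ≤ n) (hm : 1 ≤ m) :
    Set.BijOn (DTau (n * m - m + 1) (n * m))
        (DVertex (n * m - m + 1) n) (DVertex (n * m - m + 1) n) ∧
      ∀ x ∈ DVertex (n * m - m + 1) n, ∀ y ∈ DVertex (n * m - m + 1) n,
        (DArrow (n * m - m + 1) n y x ↔
          DArrow (n * m - m + 1) n (DTau (n * m - m + 1) (n * m) x) y) := by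
  have key : ∀ x ∈ DVertex (n * m - m + 1) n, ∀ y,
      (DArrow (n * m - m + 1) n y x ↔
        DArrow (n * m - m + 1) n (DTau (n * m - m + 1) (n * m) x) y) := by
    intro x hx y
    obtain ⟨i, l⟩ := x
    cases l with
    | pos j =>
      constructor
      · intro h
        cases h with
        | down i' j' h1 h2 =>
          show DArrow _ _ (i - 1, DLab.pos (j' - 1)) _
          have := DArrow.up (N := n * m - m + 1) (h := n) (i - 1) (j' - 1)
            (by omega) (by omega)
          have hjj : j' - 1 + 1 = j' := by omega
          simpa [sub_add_cancel, hjj] using this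
        | fromZ i' b =>
          show DArrow _ _ (i' + 1 - 1, DLab.pos 1) _
          have := DArrow.toZ (N := n * m - m + 1) (h := n) (i' + 1 - 1) b
          simpa [add_sub_cancel_right] using this
        | up i' j' h1 h2 =>
          show DArrow _ _ (i' + 1 - 1, DLab.pos (j' + 1)) _
          have := DArrow.down (N := n * m - m + 1) (h := n) (i' + 1 - 1) (j' + 1)
            (by omega) (by omega)
          simpa [add_sub_cancel_right] using this
      · intro h
        have hj : 1 ≤ j ∧ j ≤ n - 2 := hx j rfl
        have h' : DArrow (n * m - m + 1) n (i - 1, DLab.pos j) y := h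
        cases h' with
        | down i' j' h1 h2 =>
          have := DArrow.up (N := n * m - m + 1) (h := n) (i - 1) (j - 1)
            (by omega) (by omega)
          have hjj : j - 1 + 1 = j := by omega
          simpa [sub_add_cancel, hjj] using this
        | toZ i' b =>
          have := DArrow.fromZ (N := n * m - m + 1) (h := n) (i - 1) b
          simpa [sub_add_cancel] using this
        | up i' j' h1 h2 =>
          have := DArrow.down (N := n * m - m + 1) (h := n) (i - 1 + 1) (j + 1)
            (by omega) (by omega)
          simpa [sub_add_cancel] using this
    | z b =>
      constructor
      · intro h
        cases h with
        | toZ i' b' =>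
          show DArrow _ _
            (if i = 0 ∧ n * m % 2 = 1 then (i - 1, DLab.z (!b))
              else (i - 1, DLab.z b)) _
          split
          · have := DArrow.fromZ (N := n * m - m + 1) (h := n) (i - 1) (!b)
            simpa [sub_add_cancel] using this
          · have := DArrow.fromZ (N := n * m - m + 1) (h := n) (i - 1) b
            simpa [sub_add_cancel] using this
      · intro h
        have h' : DArrow (n * m - m + 1) n
            (if i = 0 ∧ n * m % 2 = 1 then (i - 1, DLab.z (!b))
              else (i - 1, DLab.z b)) y := h
        split at h' <;>
        · cases h' with
          | fromZ =>
            have := DArrow.toZ (N := n * m - m + 1) (h := n) (i - 1 + 1) b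
            simpa [sub_add_cancel] using this
  refine ⟨?_, fun x hx y _ => key x hx y⟩
  have hinv : Set.InvOn (DTauInv (n * m - m + 1) (n * m)) (DTau (n * m - m + 1) (n * m))
      (DVertex (n * m - m + 1) n) (DVertex (n * m - m + 1) n) :=
    ⟨fun v _ => DTauInv_DTau _ _ v, fun v _ => DTau_DTauInv _ _ v⟩
  refine hinv.bijOn ?_ ?_
  · intro v hv
    exact (DTau_mem_vertex _ _ _ v).2 hv
  · intro v hv
    have := DTau_mem_vertex (n * m - m + 1) (n * m) n (DTauInv (n * m - m + 1) (n * m) v)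
    rw [DTau_DTauInv] at this
    exact this.mp hv
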